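/- Let G be a topological group, H a dense subgroup of G, and X a metric space equipped with an action of H by isometries. Assume that for every x ∈ X the stabilizer {h ∈ H : h·x = x} is an open subgroup of H in the subspace topology induced from G. Then the H-action extends to an action of G on X by isometries in which the stabilizer in G of every point of X is an open subgroup of G; moreover such an extension is unique. -/

import Mathlib

/-!
For each `x`, the stabilizer of `x` in `H` is an open subgroup of `H`, so its closure `K` in `G`
is an open subgroup of `G` with `K ∩ H` equal to that stabilizer. As `H` meets every coset `gK`,
the orbit map `h ↦ φ h x` extends to a function on `G` that is constant on the cosets of `K`,
hence locally constant. The action laws, the isometry property and uniqueness all compare two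
locally constant functions agreeing on the dense set `H` (or `H × H`), hence everywhere.
-/

open Topology

namespace IsometryEquiv

instance applyMulAction {X : Type*} [PseudoEMetricSpace X] : MulAction (X ≃ᵢ X) X where
  smul f x := f x
  one_smul _ := rfl
  mul_smul _ _ _ := rfl

variable {G X : Type*} [Group G] [PseudoEMetricSpace X]

def monoidHomOfAction (act : G → X → X) (act_one : ∀ x, act 1 x = x)
    (act_mul : ∀ a b x, act (a * b) x = act a (act b x)) (isometry_act : ∀ g, Isometry (act g)) :
    G →* (X ≃ᵢ X) where
  toFun g :=
    { toFun := act g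
      invFun := act g⁻¹
      left_inv x := by rw [← act_mul, inv_mul_cancel, act_one]
      right_inv x := by rw [← act_mul, mul_inv_cancel, act_one]
      isometry_toFun := isometry_act g }
  map_one' := ext act_one
  map_mul' a b := ext (act_mul a b)

end IsometryEquiv

namespace IsLocallyConstant

variable {α β Y Z : Type*} [TopologicalSpace α] [TopologicalSpace β]

theorem ext_on {s : Set α} (hs : Dense s) {f g : α → Y} (hf : IsLocallyConstant f)
    (hg : IsLocallyConstant g) (hfg : Set.EqOn f g s) : f = g :=
  letI : TopologicalSpace Y := ⊥
  haveI : DiscreteTopology Y := ⟨rfl⟩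
  hf.continuous.ext_on hs hg.continuous hfg

theorem apply_comp_snd {F : Y → α → Z} (hF : ∀ y, IsLocallyConstant (F y)) {u : β → Y}
    (hu : IsLocallyConstant u) : IsLocallyConstant fun p : α × β => F (u p.2) p.1 := by
  refine (iff_eventually_eq _).2 fun ⟨a, b⟩ => ?_
  filter_upwards [((hF (u b)).eventually_eq a).prodMk_nhds (hu.eventually_eq b)]
  rintro ⟨a', b'⟩ ⟨ha, hb⟩
  simp only [hb, ha]

end IsLocallyConstant

section DenseSubgroup

variable {G : Type*} [Group G] [TopologicalSpace G]

theorem isLocallyConstant_smul_of_isOpen_stabilizer [SeparatelyContinuousMul G] {M X : Type*}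
    [Group M] [MulAction M X] (ψ : G →* M) {x : X} (hx : IsOpen {g | ψ g • x = x}) :
    IsLocallyConstant fun g => ψ g • x := by
  refine IsLocallyConstant.iff_isOpen_fiber_apply.2 fun g₀ => ?_
  have hfiber : (fun g => ψ g • x) ⁻¹' {ψ g₀ • x} = (g₀⁻¹ * ·) ⁻¹' {g | ψ g • x = x} := by
    ext g
    simp only [Set.mem_preimage, Set.mem_singleton_iff, Set.mem_ofPred_eq, map_mul, map_inv,
      mul_smul, inv_smul_eq_iff]
  rw [hfiber]
  exact hx.preimage (continuous_const_mul _)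

variable {H : Subgroup G}

theorem Dense.exists_isLocallyConstant_extend_of_isOpen [SeparatelyContinuousMul G]
    (hH : Dense (H : Set G)) {K : Subgroup G} (hK : IsOpen (K : Set G)) {Y : Type*} {f : H → Y}
    (hf : ∀ h h' : H, (h⁻¹ * h' : G) ∈ K → f h = f h') :
    ∃ F : G → Y, IsLocallyConstant F ∧ ∀ h : H, F h = f h := by
  have hcoset : ∀ g : G, IsOpen {g' | g⁻¹ * g' ∈ K} := fun g => hK.preimage (continuous_const_mul _)
  have hmeet : ∀ g : G, ∃ h : H, (g⁻¹ * h : G) ∈ K := fun g => by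
    obtain ⟨_, hgH, hgK⟩ := hH.exists_mem_open (hcoset g) ⟨g, by simp [K.one_mem]⟩
    exact ⟨⟨_, hgH⟩, hgK⟩
  choose pick hpick using hmeet
  have hF : ∀ g : G, ∀ h : H, (g⁻¹ * h : G) ∈ K → f (pick g) = f h := fun g h hh =>
    hf _ _ (by simpa [mul_assoc] using K.mul_mem (K.inv_mem (hpick g)) hh)
  refine ⟨fun g => f (pick g), (IsLocallyConstant.iff_exists_open _).2 fun g => ?_,
    fun h => hF h h (by simp [K.one_mem])⟩
  refine ⟨_, hcoset g, by simp [K.one_mem], fun g' hg' => (hF g _ ?_).symm⟩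
  simpa [mul_assoc] using K.mul_mem hg' (hpick g')

variable [IsTopologicalGroup G]

theorem Dense.exists_isOpen_comap_subtype_eq (hH : Dense (H : Set G)) {S : Subgroup H}
    (hS : IsOpen (S : Set H)) : ∃ K : Subgroup G, IsOpen (K : Set G) ∧ K.comap H.subtype = S := by
  obtain ⟨U, hU, hUS⟩ := isOpen_induced_iff.1 hS
  refine ⟨(S.map H.subtype).topologicalClosure, ?_, ?_⟩
  · have hUK : U ⊆ (S.map H.subtype).topologicalClosure := by
      refine (hH.open_subset_closure_inter hU).trans (closure_mono ?_)
      rintro g ⟨hgU, hgH⟩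
      have hgS : (⟨g, hgH⟩ : H) ∈ Subtype.val ⁻¹' U := hgU
      exact ⟨⟨g, hgH⟩, hUS ▸ hgS, rfl⟩
    have h1U : (1 : G) ∈ U := by
      change (1 : H) ∈ Subtype.val ⁻¹' U
      exact hUS ▸ S.one_mem
    exact Subgroup.isOpen_of_mem_nhds _ (Filter.mem_of_superset (hU.mem_nhds h1U) hUK)
  · have hclosure := IsInducing.subtypeVal.closure_eq_preimage_closure_image (S : Set H)
    rw [(S.isClosed_of_isOpen hS).closure_eq] at hclosure
    exact SetLike.coe_injective hclosure.symm

theorem Dense.exists_isLocallyConstant_extend (hH : Dense (H : Set G)) {S : Subgroup H}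
    (hS : IsOpen (S : Set H)) {Y : Type*} {f : H → Y} (hf : ∀ h, ∀ s ∈ S, f (h * s) = f h) :
    ∃ F : G → Y, IsLocallyConstant F ∧ ∀ h : H, F h = f h := by
  obtain ⟨K, hK, hKS⟩ := hH.exists_isOpen_comap_subtype_eq hS
  refine hH.exists_isLocallyConstant_extend_of_isOpen hK fun h h' hh => ?_
  have hmem : h⁻¹ * h' ∈ S := hKS ▸ hh
  simpa using (hf h _ hmem).symm

end DenseSubgroup

theorem IsometryEquiv.exists_monoidHom_of_isLocallyConstant {G X : Type*} [Group G]
    [TopologicalSpace G] [ContinuousMul G] [PseudoMetricSpace X] {H : Subgroup G}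
    (hH : Dense (H : Set G)) (φ : H →* (X ≃ᵢ X)) {orbit : X → G → X}
    (horbit : ∀ x, IsLocallyConstant (orbit x)) (horbit_H : ∀ x (h : H), orbit x h = φ h x) :
    ∃ ψ : G →* (X ≃ᵢ X), ∀ g x, ψ g x = orbit x g := by
  have act_one (x : X) : orbit x 1 = x := by simpa using horbit_H x 1
  have act_mul (a b : G) (x : X) : orbit x (a * b) = orbit (orbit x b) a := by
    refine congr_fun (IsLocallyConstant.ext_on (hH.prod hH)
      ((horbit x).comp_continuous continuous_mul) ((horbit x).apply_comp_snd horbit) ?_) (a, b)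
    rintro ⟨a, b⟩ ⟨ha : a ∈ H, hb : b ∈ H⟩
    calc orbit x (a * b) = φ (⟨a, ha⟩ * ⟨b, hb⟩) x := horbit_H x (⟨a, ha⟩ * ⟨b, hb⟩)
      _ = φ ⟨a, ha⟩ (φ ⟨b, hb⟩ x) := by rw [map_mul, IsometryEquiv.mul_apply]
      _ = orbit (orbit x b) a := by rw [← horbit_H x ⟨b, hb⟩, ← horbit_H _ ⟨a, ha⟩]
  have isometry_act (g : G) : Isometry fun x => orbit x g := by
    refine Isometry.of_dist_eq fun x y => congr_fun (IsLocallyConstant.ext_on hH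
      ((horbit x).comp₂ (horbit y) dist) (IsLocallyConstant.const (dist x y)) ?_) g
    intro g (hg : g ∈ H)
    change dist (orbit x g) (orbit y g) = dist x y
    rw [horbit_H x ⟨g, hg⟩, horbit_H y ⟨g, hg⟩]
    exact (φ _).dist_eq x y
  exact ⟨monoidHomOfAction (fun g x => orbit x g) act_one act_mul isometry_act,
    fun _ _ => rfl⟩

theorem IsometryEquiv.monoidHom_ext_of_dense {G X : Type*} [Group G] [TopologicalSpace G]
    [SeparatelyContinuousMul G] [PseudoEMetricSpace X] {s : Set G} (hs : Dense s)
    {ψ ψ' : G →* (X ≃ᵢ X)} (hψ : ∀ x, IsOpen {g | ψ g x = x}) (hψ' : ∀ x, IsOpen {g | ψ' g x = x})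
    (hψψ' : ∀ g ∈ s, ψ g = ψ' g) : ψ = ψ' := by
  ext g x
  refine congr_fun (IsLocallyConstant.ext_on hs
    (isLocallyConstant_smul_of_isOpen_stabilizer ψ (hψ x))
    (isLocallyConstant_smul_of_isOpen_stabilizer ψ' (hψ' x)) fun g hg => ?_) g
  simp [hψψ' g hg]

/-- Extension of an isometric action of a dense subgroup `H` of a topological
group `G` on a metric space `X`, assuming all point stabilizers in `H` are open
(in the subspace topology induced from `G`), to an isometric action of `G` with
open point stabilizers; such an extension is unique. -/
theorem denseSubgroup_isometricAction_extension
    {G : Type*} [Group G] [TopologicalSpace G] [IsTopologicalGroup G]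
    (H : Subgroup G) (hdense : Dense (H : Set G))
    {X : Type*} [MetricSpace X]
    (φ : H →* (X ≃ᵢ X))
    (hstab : ∀ x : X, IsOpen {h : H | φ h x = x}) :
    ∃! ψ : G →* (X ≃ᵢ X),
      (∀ h : H, ψ (h : G) = φ h) ∧ (∀ x : X, IsOpen {g : G | ψ g x = x}) := by
  choose orbit horbit horbit_H using fun x : X =>
    hdense.exists_isLocallyConstant_extend (S := (MulAction.stabilizer (X ≃ᵢ X) x).comap φ)
      (hstab x) (f := fun h => φ h x) fun h s hs => by
        rw [map_mul, IsometryEquiv.mul_apply]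
        exact congrArg (φ h) hs
  obtain ⟨ψ, hψ⟩ := IsometryEquiv.exists_monoidHom_of_isLocallyConstant hdense φ horbit horbit_H
  have hψ_H (h : H) : ψ h = φ h := IsometryEquiv.ext fun x => (hψ h x).trans (horbit_H x h)
  have hψ_stab (x : X) : IsOpen {g : G | ψ g x = x} := by
    simpa only [hψ] using (horbit x).isOpen_fiber x
  refine ⟨ψ, ⟨hψ_H, hψ_stab⟩, fun ψ' ⟨hψ'_H, hψ'_stab⟩ => ?_⟩
  refine IsometryEquiv.monoidHom_ext_of_dense hdense hψ'_stab hψ_stab ?_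
  intro g (hg : g ∈ H)
  exact (hψ'_H ⟨g, hg⟩).trans (hψ_H ⟨g, hg⟩).symm
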